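/- arXiv:1009.5518 — 2 statements merged into one kernel-verified Lean document; each statement's English description precedes it below -/
import Mathlib

section
/- Let K be a commutative ring containing Q. For f, g formal power series in zK[[z]] (zero constant term), the iteration matrix satisfies [f ∘ g] = [f] · [g], where [f] is the ℕ×ℕ matrix with entries [f]_{ij} determined by f^i/i! = ∑_j [f]_{ij} z^j/j!. -/
/-- The identity ℕ×ℕ (upper triangular) matrix. -/
def trOne {K : Type*} [CommRing K] : ℕ → ℕ → K := fun i j => if i = j then 1 else 0

/-- Product of ℕ×ℕ upper triangular matrices (entrywise a finite sum). -/
def trMul {K : Type*} [CommRing K] (M N : ℕ → ℕ → K) : ℕ → ℕ → K :=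
  fun i j => ∑ k ∈ Finset.Icc i j, M i k * N k j

/-- Powers of an ℕ×ℕ upper triangular matrix. -/
def trPow {K : Type*} [CommRing K] (M : ℕ → ℕ → K) : ℕ → (ℕ → ℕ → K)
  | 0 => trOne
  | n + 1 => trMul (trPow M n) M

/-- The `n`-diagonal matrix determined by the sequence `a`:
entry `(i, i+n)` is `a i`, all other entries vanish. -/
def diagM {K : Type*} [CommRing K] (n : ℕ) (a : ℕ → K) : ℕ → ℕ → K :=
  fun i j => if j = i + n then a i else 0

/-- A matrix is strictly upper triangular if `M i j = 0` whenever `j ≤ i`. -/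
def StrictTri {K : Type*} [CommRing K] (M : ℕ → ℕ → K) : Prop :=
  ∀ i j, j ≤ i → M i j = 0

/-- The iteration matrix of a power series `f`: `[f]_{ij}` is `j!/i!` times the
coefficient of `z^j` in `f^i`, i.e. `f^i/i! = ∑_j [f]_{ij} z^j/j!`. -/
noncomputable def itMat {K : Type*} [CommRing K] [Algebra ℚ K] (f : PowerSeries K) :
    ℕ → ℕ → K :=
  fun i j => ((j.factorial : ℚ) / (i.factorial : ℚ)) • PowerSeries.coeff j (f ^ i)

/-- Composition `f ∘ g` of formal power series, valid when `g` has zero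
constant term: the coefficient of `z^j` only depends on `∑_{i ≤ j} f_i g^i`. -/
noncomputable def compPS {K : Type*} [CommRing K] (f g : PowerSeries K) : PowerSeries K :=
  PowerSeries.mk fun j =>
    PowerSeries.coeff j (∑ i ∈ Finset.range (j + 1), PowerSeries.coeff i f • g ^ i)

/-!
Since `g` has no constant term, `compPS f g` is Mathlib's substitution `f.subst g`, which is a
ring homomorphism in `f`; hence `(f ∘ g)^i = f^i ∘ g` and
`[z^j] (f ∘ g)^i = ∑_k [z^k] f^i · [z^j] g^k`. Rescaling by `j!/i! = (k!/i!)(j!/k!)` turns this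
into the matrix product.
-/

open PowerSeries

namespace PowerSeries

variable {R : Type*} [CommRing R]

theorem coeff_pow_eq_zero_of_lt {g : R⟦X⟧} (hg : constantCoeff g = 0) {j k : ℕ} (h : j < k) :
    coeff j (g ^ k) = 0 :=
  X_pow_dvd_iff.mp (pow_dvd_pow_of_dvd (X_dvd_iff.mpr hg) k) j h

theorem coeff_subst_eq_sum_range {g : R⟦X⟧} (hg : constantCoeff g = 0) (f : R⟦X⟧) (j : ℕ) :
    coeff j (f.subst g) = ∑ k ∈ Finset.range (j + 1), coeff k f * coeff j (g ^ k) := by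
  rw [coeff_subst' (HasSubst.of_constantCoeff_zero' hg)]
  refine finsum_eq_sum_of_support_subset _ fun k hk => ?_
  rw [Finset.coe_range, Set.mem_Iio, Nat.lt_succ_iff]
  by_contra! hjk
  exact hk (by simp only [coeff_pow_eq_zero_of_lt hg hjk, smul_zero])

theorem compPS_eq_subst (f : R⟦X⟧) {g : R⟦X⟧} (hg : constantCoeff g = 0) :
    compPS f g = f.subst g := by
  ext j
  simp only [compPS, coeff_mk, map_sum, coeff_smul, smul_eq_mul, coeff_subst_eq_sum_range hg]

theorem coeff_compPS_pow (f : R⟦X⟧) {g : R⟦X⟧} (hg : constantCoeff g = 0) (i j : ℕ) :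
    coeff j (compPS f g ^ i) = ∑ k ∈ Finset.range (j + 1), coeff k (f ^ i) * coeff j (g ^ k) := by
  rw [compPS_eq_subst f hg, ← subst_pow (HasSubst.of_constantCoeff_zero' hg),
    coeff_subst_eq_sum_range hg]

end PowerSeries

theorem factorial_div_smul_mul {K : Type*} [CommRing K] [Algebra ℚ K] {i k j : ℕ} (a b : K) :
    ((j.factorial : ℚ) / i.factorial) • (a * b) =
      ((k.factorial : ℚ) / i.factorial) • a * (((j.factorial : ℚ) / k.factorial) • b) := by
  have hk : (k.factorial : ℚ) ≠ 0 := mod_cast k.factorial_ne_zero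
  rw [smul_mul_smul_comm, div_mul_div_comm, mul_comm (k.factorial : ℚ),
    mul_div_mul_right _ _ hk]

theorem itMat_comp {K : Type*} [CommRing K] [Algebra ℚ K] (f g : PowerSeries K)
    (hf : PowerSeries.constantCoeff f = 0) (hg : PowerSeries.constantCoeff g = 0) :
    itMat (compPS f g) = trMul (itMat f) (itMat g) := by
  funext i j
  have hIcc : Finset.Icc i j ⊆ Finset.range (j + 1) := fun k hk => by
    rw [Finset.mem_Icc] at hk; rw [Finset.mem_range]; omega
  have hvanish : ∀ k ∈ Finset.range (j + 1), k ∉ Finset.Icc i j →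
      coeff k (f ^ i) * coeff j (g ^ k) = 0 := fun k hk hk' => by
    rw [Finset.mem_range] at hk; rw [Finset.mem_Icc] at hk'
    rw [coeff_pow_eq_zero_of_lt hf (by omega), zero_mul]
  simp only [itMat, trMul]
  rw [coeff_compPS_pow f hg, ← Finset.sum_subset hIcc hvanish, Finset.smul_sum]
  exact Finset.sum_congr rfl fun k _ => factorial_div_smul_mul _ _
end

section
/- Let S be the ℕ×ℕ matrix with S_{ij} = S(j,i) the Stirling numbers of the second kind, and define Λ(S) = ∑_{n≥0} (-1)^n (S-1)^n/(n+1) and log(S) = ∑_{n≥1} (-1)^{n+1}(S-1)^n/n. Then Λ(S)_{1j} = log(S)_{1,j+1} for every j ≥ 1. -/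
/-- Stirling numbers of the second kind: `stirling2 j d` is the number of
partitions of a `j`-element set into `d` nonempty blocks. -/
def stirling2 : Nat → Nat → Nat
  | 0, 0 => 1
  | 0, _ + 1 => 0
  | _ + 1, 0 => 0
  | n + 1, k + 1 => stirling2 n k + (k + 1) * stirling2 n (k + 1)

/-- Matrix exponential `exp M = ∑ Mⁿ/n!`, entrywise a finite sum for
strictly upper triangular `M` (terms with `n > j - i` vanish). -/
noncomputable def trExp {K : Type*} [CommRing K] [Algebra ℚ K] (M : ℕ → ℕ → K) :
    ℕ → ℕ → K :=
  fun i j => ∑ n ∈ Finset.range (j - i + 1), ((n.factorial : ℚ)⁻¹) • trPow M n i j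

/-- Matrix logarithm `log M = ∑_{n≥1} (-1)^{n+1} (M-1)ⁿ/n`, entrywise a finite
sum for unitriangular `M` (terms with `n > j - i` vanish). -/
noncomputable def trLog {K : Type*} [CommRing K] [Algebra ℚ K] (M : ℕ → ℕ → K) :
    ℕ → ℕ → K :=
  fun i j => ∑ n ∈ Finset.Icc 1 (j - i),
    (((-1 : ℚ) ^ (n + 1)) / n) • trPow (fun a b => M a b - trOne a b) n i j

/-- `Λ(M) = ∑_{n≥0} (-1)ⁿ (M-1)ⁿ/(n+1)`, entrywise a finite sum for
unitriangular `M`. -/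
noncomputable def trLam {K : Type*} [CommRing K] [Algebra ℚ K] (M : ℕ → ℕ → K) :
    ℕ → ℕ → K :=
  fun i j => ∑ n ∈ Finset.range (j - i + 1),
    (((-1 : ℚ) ^ n) / (n + 1)) • trPow (fun a b => M a b - trOne a b) n i j

/-- The Stirling matrix `S` with `S_{ij} = S(j, i)`. -/
noncomputable def Smat : ℕ → ℕ → ℚ := fun i j => (stirling2 j i : ℚ)

/-!
Right multiplication of rows by `S` is, on exponential generating functions, composition with
`φ = eˣ - 1`; so row 1 of `Sᵗ` is the iterate `φₜ`, and `φₜ₊₁ = exp ∘ φₜ - 1`. Expanding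
`Sᵗ = (1 + (S - 1))ᵗ` binomially makes every entry a polynomial in `t`, whose derivative at `t = 0`
is the corresponding entry of `log S`. Differentiating `φₜ ∘ φ = exp ∘ φₜ - 1` at `t = 0` gives
Julia's equation `V ∘ φ = eˣ V` for the generating function `V` of row 1 of `log S`, and
differentiating that in `x` gives `V' ∘ φ = V + V'`: the shifted log row `V'` satisfies
`V' (S - 1) = V`. Row 1 of `Λ(S)` satisfies the same equation, because `Λ(S) (S - 1) = log S`, and
the equation has only one solution vanishing at `0`, since the superdiagonal `S(k + 1, k)` of
`S - 1` is nonzero for `k ≥ 1`.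
-/

open Finset

theorem stirling2_eq_stirlingSecond : stirling2 = Nat.stirlingSecond := by
  funext n k
  induction n generalizing k with
  | zero => cases k <;> rfl
  | succ n ih =>
    cases k with
    | zero => rfl
    | succ k => rw [stirling2, Nat.stirlingSecond_succ_succ, ih, ih, add_comm]

namespace Nat

theorem sum_antidiagonal_choose_succ_mul' (f : ℕ → ℕ → ℕ) (n : ℕ) :
    ∑ p ∈ antidiagonal (n + 1), (n + 1).choose p.1 * f p.1 p.2 =
      ∑ p ∈ antidiagonal n, n.choose p.1 * (f p.1 (p.2 + 1) + f (p.1 + 1) p.2) := by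
  simp only [mul_add, sum_add_distrib]
  convert sum_antidiagonal_choose_succ_mul (R := ℕ) f n using 2 <;> simp only [Nat.cast_id]
  refine sum_congr rfl fun p hp => ?_
  rw [choose_symm_of_eq_add (mem_antidiagonal.mp hp).symm]

theorem stirlingSecond_succ_succ_eq_sum_choose (n k : ℕ) :
    stirlingSecond (n + 1) (k + 1) = ∑ p ∈ antidiagonal n, n.choose p.1 * stirlingSecond p.1 k := by
  induction n generalizing k with
  | zero => cases k <;> simp [stirlingSecond_succ_succ]
  | succ n ih =>
    rw [sum_antidiagonal_choose_succ_mul' (fun i _ => stirlingSecond i k)]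
    simp only [mul_add, sum_add_distrib, ← ih]
    cases k with
    | zero => simp [stirlingSecond_one_right]
    | succ k =>
      have hsucc : ∑ p ∈ antidiagonal n, n.choose p.1 * stirlingSecond (p.1 + 1) (k + 1) =
          (k + 1) * stirlingSecond (n + 1) (k + 2) + stirlingSecond (n + 1) (k + 1) := by
        simp only [stirlingSecond_succ_succ _ k, mul_add, sum_add_distrib, mul_left_comm _ (k + 1),
          ← mul_sum, ← ih]
      rw [hsucc, stirlingSecond_succ_succ (n + 1) (k + 1)]
      ring

theorem choose_mul_stirlingSecond_add (n j k : ℕ) :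
    (j + k).choose j * stirlingSecond n (j + k) =
      ∑ p ∈ antidiagonal n, n.choose p.1 * (stirlingSecond p.1 j * stirlingSecond p.2 k) := by
  induction n generalizing j k with
  | zero => rcases j with _ | j <;> rcases k with _ | k <;> simp [stirlingSecond_eq_zero_of_lt]
  | succ n ih =>
    rcases j with _ | j
    · rw [sum_eq_single (0, n + 1)]
      · simp
      · rintro ⟨_ | a, b⟩ h hne
        · simp_all
        · simp
      · simp
    rcases k with _ | k
    · rw [sum_eq_single (n + 1, 0)]
      · simp
      · rintro ⟨a, _ | b⟩ h hne
        · simp_all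
        · simp
      · simp
    set P : ℕ → ℕ → ℕ := fun j k =>
      ∑ p ∈ antidiagonal n, n.choose p.1 * (stirlingSecond p.1 j * stirlingSecond p.2 k)
    have hsplit : ∑ p ∈ antidiagonal (n + 1),
        (n + 1).choose p.1 * (stirlingSecond p.1 (j + 1) * stirlingSecond p.2 (k + 1)) =
        (j + k + 2) * P (j + 1) (k + 1) + P (j + 1) k + P j (k + 1) := by
      rw [sum_antidiagonal_choose_succ_mul'
        fun a b => stirlingSecond a (j + 1) * stirlingSecond b (k + 1)]
      simp only [P, stirlingSecond_succ_succ, mul_sum, ← sum_add_distrib]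
      exact sum_congr rfl fun p _ => by ring
    simp only [hsplit, P, ← ih]
    rw [show j + 1 + (k + 1) = j + k + 1 + 1 by ring,
      show j + 1 + k = j + k + 1 by ring, show j + (k + 1) = j + k + 1 by ring,
      stirlingSecond_succ_succ n (j + k + 1), choose_succ_succ (j + k + 1) j]
    ring

end Nat

section BinomialConvolution

variable {R : Type*} [CommRing R]

def binomConv (a b : ℕ → R) : ℕ → R :=
  fun n => ∑ p ∈ antidiagonal n, n.choose p.1 * a p.1 * b p.2

def binomConvPow (a : ℕ → R) : ℕ → ℕ → R
  | 0 => Pi.single 0 1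
  | m + 1 => binomConv (binomConvPow a m) a

theorem binomConvPow_succ (a : ℕ → R) (m : ℕ) :
    binomConvPow a (m + 1) = binomConv (binomConvPow a m) a := rfl

noncomputable def binomExp [Algebra ℚ R] (a : ℕ → R) : ℕ → R :=
  fun n => ∑ m ∈ range (n + 1), (m.factorial : ℚ)⁻¹ • binomConvPow a m n

theorem binomConv_smul_left (c : R) (a b : ℕ → R) :
    binomConv (c • a) b = c • binomConv a b := by
  funext n
  simp [binomConv, mul_sum, mul_assoc, mul_left_comm]

theorem map_binomConvPow {R' : Type*} [CommRing R'] (f : R →+* R') (a : ℕ → R) (m n : ℕ) :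
    f (binomConvPow a m n) = binomConvPow (f ∘ a) m n := by
  induction m generalizing n with
  | zero => by_cases h : n = 0 <;> simp [binomConvPow, h]
  | succ m ih => simp [binomConvPow, binomConv, ih]

theorem map_binomExp [Algebra ℚ R] {R' : Type*} [CommRing R'] [Algebra ℚ R'] (f : R →+* R')
    (a : ℕ → R) (n : ℕ) : f (binomExp a n) = binomExp (f ∘ a) n := by
  simp [binomExp, map_rat_smul, map_binomConvPow]

theorem binomConvPow_eq_zero_of_lt {a : ℕ → R} (ha : a 0 = 0) {m n : ℕ} (h : n < m) :
    binomConvPow a m n = 0 := by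
  induction m generalizing n with
  | zero => omega
  | succ m ih =>
    rw [binomConvPow_succ, binomConv]
    refine sum_eq_zero fun p hp => ?_
    rw [HasAntidiagonal.mem_antidiagonal] at hp
    rcases lt_or_ge p.1 m with hlt | hge
    · rw [ih hlt, mul_zero, zero_mul]
    · rw [show p.2 = 0 by omega, ha, mul_zero]

theorem binomExp_eq_sum_range [Algebra ℚ R] {a : ℕ → R} (ha : a 0 = 0) {n N : ℕ} (h : n ≤ N) :
    binomExp a n = ∑ m ∈ range (N + 1), (m.factorial : ℚ)⁻¹ • binomConvPow a m n := by
  refine sum_subset (range_subset_range.mpr (by omega)) fun m _ hm => ?_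
  rw [binomConvPow_eq_zero_of_lt ha (by simpa using hm), smul_zero]

variable [Algebra ℚ R]

noncomputable def egf : (ℕ → R) →ₗ[R] PowerSeries R where
  toFun a := PowerSeries.mk fun n => (n.factorial : ℚ)⁻¹ • a n
  map_add' a b := by ext; simp
  map_smul' r a := by ext; simp

theorem coeff_egf (a : ℕ → R) (n : ℕ) :
    PowerSeries.coeff n (egf a) = (n.factorial : ℚ)⁻¹ • a n := by
  simp [egf]

theorem egf_injective : Function.Injective (egf (R := R)) := by
  intro a b h
  funext n
  have := congrArg (PowerSeries.coeff n) h
  rwa [coeff_egf, coeff_egf, smul_right_inj (inv_ne_zero (by positivity))] at this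

theorem egf_binomConv (a b : ℕ → R) : egf (binomConv a b) = egf a * egf b := by
  ext n
  simp only [coeff_egf, PowerSeries.coeff_mul, binomConv, smul_sum]
  refine sum_congr rfl fun p hp => ?_
  obtain rfl := HasAntidiagonal.mem_antidiagonal.mp hp
  have key : ((p.1 + p.2).factorial : ℚ)⁻¹ * ((p.1 + p.2).choose p.1 : ℚ) =
      (p.1.factorial : ℚ)⁻¹ * (p.2.factorial : ℚ)⁻¹ := by
    rw [Nat.cast_choose ℚ (Nat.le_add_right _ _), Nat.add_sub_cancel_left]
    field_simp
  simp only [Algebra.smul_def, ← map_natCast (algebraMap ℚ R)]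
  rw [← mul_assoc, ← mul_assoc, ← map_mul, key, map_mul]
  ring

theorem binomConv_comm (a b : ℕ → R) : binomConv a b = binomConv b a :=
  egf_injective (by rw [egf_binomConv, egf_binomConv, mul_comm])

theorem binomConv_assoc (a b c : ℕ → R) :
    binomConv (binomConv a b) c = binomConv a (binomConv b c) :=
  egf_injective (by simp only [egf_binomConv, mul_assoc])

theorem egf_shift (a : ℕ → R) :
    egf (fun n => a (n + 1)) = PowerSeries.derivative R (egf a) := by
  ext n
  rw [PowerSeries.coeff_derivative, coeff_egf, coeff_egf, Nat.factorial_succ]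
  simp only [Algebra.smul_def, mul_comm _ (a (n + 1)), mul_assoc]
  congr 1
  rw [← map_natCast (algebraMap ℚ R), ← map_one (algebraMap ℚ R), ← map_add, ← map_mul]
  congr 1
  push_cast
  field_simp

theorem egf_one : egf (fun _ => (1 : R)) = PowerSeries.exp R := by
  ext n
  simp [coeff_egf, PowerSeries.coeff_exp, Algebra.smul_def]

theorem egf_single_zero : egf (Pi.single 0 1 : ℕ → R) = 1 := by
  ext n
  cases n <;> simp [coeff_egf, PowerSeries.coeff_one]

theorem egf_single_one : egf (Pi.single 1 1 : ℕ → R) = PowerSeries.X := by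
  ext n
  rcases n with _ | _ | n <;> simp [coeff_egf, PowerSeries.coeff_X]

theorem egf_binomConvPow (a : ℕ → R) (m : ℕ) : egf (binomConvPow a m) = egf a ^ m := by
  induction m with
  | zero => exact egf_single_zero
  | succ m ih => rw [binomConvPow_succ, egf_binomConv, ih, pow_succ]

theorem binomExp_single_one : binomExp (Pi.single 1 1 : ℕ → R) = fun _ => 1 := by
  funext n
  have hpow (m : ℕ) : (n.factorial : ℚ)⁻¹ • binomConvPow (Pi.single 1 1 : ℕ → R) m n =
      if n = m then 1 else 0 := by
    rw [← coeff_egf, egf_binomConvPow, egf_single_one, PowerSeries.coeff_X_pow]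
  rw [binomExp, sum_eq_single n]
  · simpa using hpow n
  · intro m _ hmn
    have := hpow m
    rw [if_neg (Ne.symm hmn), smul_eq_zero] at this
    simp [this.resolve_left (by positivity)]
  · simp

end BinomialConvolution

section RowOperators

variable {R : Type*} [CommRing R]

/-- The row `v M` for an upper triangular `M`: entries `M k n` with `k > n` are never read. -/
def rowMul (M : ℕ → ℕ → R) : (ℕ → R) →ₗ[R] (ℕ → R) where
  toFun v n := ∑ k ∈ range (n + 1), v k * M k n
  map_add' a b := by funext n; simp [add_mul, sum_add_distrib]
  map_smul' r a := by funext n; simp [mul_sum, mul_assoc]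

theorem rowMul_apply (M : ℕ → ℕ → R) (v : ℕ → R) (n : ℕ) :
    rowMul M v n = ∑ k ∈ range (n + 1), v k * M k n := rfl

theorem rowMul_apply_eq_sum_range {M : ℕ → ℕ → R} (hM : ∀ k n, n < k → M k n = 0) (v : ℕ → R)
    {n N : ℕ} (h : n ≤ N) : rowMul M v n = ∑ k ∈ range (N + 1), v k * M k n := by
  refine sum_subset (range_subset_range.mpr (by omega)) fun k _ hk => ?_
  rw [hM k n (by simpa using hk), mul_zero]

theorem map_rowMul {R' : Type*} [CommRing R'] (f : R →+* R') (M : ℕ → ℕ → R) (v : ℕ → R)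
    (n : ℕ) : f (rowMul M v n) = rowMul (fun k n => f (M k n)) (f ∘ v) n := by
  simp [rowMul_apply]

theorem rowMul_trOne : rowMul (trOne : ℕ → ℕ → R) = 1 := by
  ext v n
  simp [rowMul_apply, trOne]

theorem rowMul_sub_trOne (M : ℕ → ℕ → R) :
    rowMul (fun a b => M a b - trOne a b) = rowMul M - 1 := by
  ext v n
  simp [rowMul_apply, mul_sub, sum_sub_distrib, ← rowMul_trOne (R := R)]

theorem rowMul_pow_apply_zero (M : ℕ → ℕ → R) (v : ℕ → R) (t : ℕ) :
    (rowMul M ^ t) v 0 = M 0 0 ^ t * v 0 := by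
  induction t with
  | zero => simp
  | succ t ih =>
    rw [pow_succ', Module.End.mul_apply, rowMul_apply, sum_range_one, ih, pow_succ]
    ring

theorem trPow_eq_zero_of_lt (M : ℕ → ℕ → R) (p : ℕ) {i k : ℕ} (h : k < i) :
    trPow M p i k = 0 := by
  cases p with
  | zero => simp [trPow, trOne, h.ne']
  | succ p => simp [trPow, trMul, Icc_eq_empty_of_lt h]

theorem trPow_eq_rowMul_pow (M : ℕ → ℕ → R) (p i : ℕ) :
    trPow M p i = (rowMul M ^ p) (Pi.single i 1) := by
  induction p with
  | zero =>
    funext n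
    simp [trPow, trOne, Pi.single_apply, eq_comm]
  | succ p ih =>
    funext n
    rw [pow_succ', Module.End.mul_apply, ← ih, rowMul_apply, trPow, trMul]
    refine sum_subset (fun k hk => by rw [mem_Icc] at hk; rw [mem_range]; omega) fun k hkn hk => ?_
    rw [trPow_eq_zero_of_lt M p (by rw [mem_Icc] at hk; rw [mem_range] at hkn; omega), zero_mul]

theorem rowMul_pow_apply_eq_zero {M : ℕ → ℕ → R} (hM : StrictTri M) {v : ℕ → R} {j : ℕ}
    (hv : ∀ k < j, v k = 0) (p : ℕ) {n : ℕ} (hn : n < j + p) : (rowMul M ^ p) v n = 0 := by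
  induction p generalizing n with
  | zero => exact hv n hn
  | succ p ih =>
    rw [pow_succ', Module.End.mul_apply, rowMul_apply]
    refine sum_eq_zero fun k hk => ?_
    rcases lt_or_ge k (j + p) with h | h
    · rw [ih h, zero_mul]
    · rw [hM k n (by rw [mem_range] at hk; omega), mul_zero]

/-- The row `v f(M)` for the power series `f = ∑ c p xᵖ`; for strictly upper triangular `M` the
terms dropped by the truncation vanish. -/
def rowMulSeries (M : ℕ → ℕ → R) (c v : ℕ → R) : ℕ → R :=
  fun n => ∑ p ∈ range (n + 1), c p * (rowMul M ^ p) v n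

theorem rowMul_add_one_pow_apply {M : ℕ → ℕ → R} (hM : StrictTri M) (t : ℕ) (v : ℕ → R)
    (n : ℕ) : ((rowMul M + 1) ^ t) v n = rowMulSeries M (fun p => (t.choose p : R)) v n := by
  have hv : ∀ k < 0, v k = 0 := by simp
  rw [(Commute.one_right _).add_pow]
  simp only [one_pow, mul_one, LinearMap.sum_apply, Finset.sum_apply, Module.End.mul_apply,
    Module.End.natCast_apply, map_nsmul, Pi.smul_apply]
  simp only [nsmul_eq_mul]
  calc ∑ p ∈ range (t + 1), (t.choose p : R) * (rowMul M ^ p) v n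
      = ∑ p ∈ range (t + n + 1), (t.choose p : R) * (rowMul M ^ p) v n := by
        refine sum_subset (range_subset_range.mpr (by omega)) fun p _ hp => ?_
        rw [Nat.choose_eq_zero_of_lt (by rw [mem_range] at hp; omega), Nat.cast_zero, zero_mul]
    _ = rowMulSeries M (fun p => (t.choose p : R)) v n := by
        refine (sum_subset (range_subset_range.mpr (by omega)) fun p _ hp => ?_).symm
        rw [rowMul_pow_apply_eq_zero hM hv p (by rw [mem_range] at hp; omega), mul_zero]

theorem rowMul_rowMulSeries {M : ℕ → ℕ → R} (hM : StrictTri M) {c c' : ℕ → R}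
    (hc : ∀ p, c' (p + 1) = c p) (hc0 : c' 0 = 0) (v : ℕ → R) :
    rowMul M (rowMulSeries M c v) = rowMulSeries M c' v := by
  have hv : ∀ k < 0, v k = 0 := by simp
  funext n
  calc rowMul M (rowMulSeries M c v) n
      = ∑ k ∈ range (n + 1), ∑ p ∈ range (n + 1), c p * ((rowMul M ^ p) v k * M k n) := by
        rw [rowMul_apply]
        refine sum_congr rfl fun k hk => ?_
        rw [rowMulSeries, sum_mul]
        simp only [mul_assoc]
        refine sum_subset (range_subset_range.mpr (by rw [mem_range] at hk; omega)) fun p _ hp => ?_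
        rw [rowMul_pow_apply_eq_zero hM hv p (by rw [mem_range] at hp; omega), zero_mul, mul_zero]
    _ = ∑ p ∈ range (n + 1), c p * (rowMul M ^ (p + 1)) v n := by
        rw [sum_comm]
        refine sum_congr rfl fun p _ => ?_
        rw [← mul_sum, pow_succ', Module.End.mul_apply, rowMul_apply]
    _ = rowMulSeries M c' v n := by
        rw [rowMulSeries, sum_range_succ, rowMul_pow_apply_eq_zero hM hv (n + 1) (by omega),
          mul_zero, add_zero, sum_range_succ' _ n, hc0, zero_mul, add_zero]
        simp only [hc]

theorem eq_zero_of_rowMul_eq_zero [NoZeroDivisors R] {M : ℕ → ℕ → R} (hM : StrictTri M)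
    (hsup : ∀ k, k ≠ 0 → M k (k + 1) ≠ 0) {d : ℕ → R} (hd : rowMul M d = 0) (h0 : d 0 = 0) :
    d = 0 := by
  suffices ∀ j, d j = 0 from funext this
  intro j
  induction j using Nat.strong_induction_on with
  | _ j ih =>
    rcases Nat.eq_zero_or_pos j with rfl | hj
    · exact h0
    have h := congrFun hd (j + 1)
    rw [rowMul_apply, sum_range_succ, hM (j + 1) (j + 1) le_rfl, mul_zero, add_zero,
      sum_range_succ, sum_eq_zero fun k hk => by rw [ih k (mem_range.mp hk), zero_mul],
      zero_add] at h
    exact (mul_eq_zero.mp h).resolve_right (hsup j hj.ne')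

end RowOperators

section StirlingAction

variable {R : Type*} [CommRing R]

/-- Right multiplication by `stirlingMat` is composition of exponential generating functions
with `eˣ - 1`. -/
def stirlingMat : ℕ → ℕ → R := fun k n => (stirling2 n k : R)

theorem stirlingMat_eq_zero_of_lt {k n : ℕ} (h : n < k) : (stirlingMat k n : R) = 0 := by
  simp [stirlingMat, stirling2_eq_stirlingSecond, Nat.stirlingSecond_eq_zero_of_lt h]

theorem rowMul_stirlingMat_binomConv (a b : ℕ → R) :
    rowMul stirlingMat (binomConv a b) =
      binomConv (rowMul stirlingMat a) (rowMul stirlingMat b) := by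
  funext n
  set T : ℕ → ℕ → R := fun i j => a i * b j * ((i + j).choose i * stirlingMat (i + j) n)
  have lhs : rowMul stirlingMat (binomConv a b) n =
      ∑ i ∈ range (n + 1), ∑ j ∈ range (n + 1), T i j := by
    calc rowMul stirlingMat (binomConv a b) n
        = ∑ k ∈ range (n + 1), ∑ i ∈ range (k + 1), T i (k - i) := by
          rw [rowMul_apply]
          refine sum_congr rfl fun k _ => ?_
          rw [binomConv, Nat.sum_antidiagonal_eq_sum_range_succ
            (fun i j => (k.choose i : R) * a i * b j) k, sum_mul]
          refine sum_congr rfl fun i hi => ?_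
          simp only [T, show i + (k - i) = k by have := mem_range.mp hi; omega]
          ring
      _ = ∑ i ∈ range (n + 1), ∑ j ∈ range (n + 1 - i), T i j := sum_range_diag_flip _ _
      _ = ∑ i ∈ range (n + 1), ∑ j ∈ range (n + 1), T i j := by
          refine sum_congr rfl fun i _ => sum_subset (range_subset_range.mpr (by omega))
            fun j _ hj => ?_
          rw [mem_range, not_lt] at hj
          simp only [T, stirlingMat_eq_zero_of_lt (show n < i + j by omega), mul_zero]
  have rhs : binomConv (rowMul stirlingMat a) (rowMul stirlingMat b) n =
      ∑ i ∈ range (n + 1), ∑ j ∈ range (n + 1), T i j := by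
    have hS : ∀ k n, n < k → (stirlingMat k n : R) = 0 := fun _ _ => stirlingMat_eq_zero_of_lt
    calc binomConv (rowMul stirlingMat a) (rowMul stirlingMat b) n
        = ∑ p ∈ antidiagonal n, ∑ i ∈ range (n + 1), ∑ j ∈ range (n + 1),
            a i * b j * (n.choose p.1 * (stirlingMat i p.1 * stirlingMat j p.2)) := by
          refine sum_congr rfl fun p hp => ?_
          have hp := HasAntidiagonal.mem_antidiagonal.mp hp
          rw [rowMul_apply_eq_sum_range hS a (show p.1 ≤ n by omega),
            rowMul_apply_eq_sum_range hS b (show p.2 ≤ n by omega), mul_assoc, sum_mul_sum,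
            mul_sum]
          refine sum_congr rfl fun i _ => ?_
          rw [mul_sum]
          refine sum_congr rfl fun j _ => ?_
          ring
      _ = ∑ i ∈ range (n + 1), ∑ j ∈ range (n + 1), T i j := by
          rw [sum_comm]
          refine sum_congr rfl fun i _ => ?_
          rw [sum_comm]
          refine sum_congr rfl fun j _ => ?_
          rw [← mul_sum]
          congr 1
          have := congrArg (Nat.cast (R := R)) (Nat.choose_mul_stirlingSecond_add n i j)
          push_cast at this
          simp only [stirlingMat, stirling2_eq_stirlingSecond, this]
  rw [lhs, rhs]

theorem rowMul_stirlingMat_single (i : ℕ) :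
    rowMul stirlingMat (Pi.single i 1) = fun n => (stirlingMat i n : R) := by
  funext n
  simp only [rowMul_apply, Pi.single_apply, ite_mul, one_mul, zero_mul, sum_ite_eq', mem_range]
  split_ifs with h
  · rfl
  · rw [stirlingMat_eq_zero_of_lt (by omega)]

theorem rowMul_stirlingMat_single_zero :
    rowMul stirlingMat (Pi.single 0 1) = (Pi.single 0 1 : ℕ → R) := by
  rw [rowMul_stirlingMat_single]
  funext n
  cases n <;> simp [stirlingMat, stirling2_eq_stirlingSecond]

theorem rowMul_stirlingMat_single_one :
    rowMul stirlingMat (Pi.single 1 1) = (fun _ => 1) - (Pi.single 0 1 : ℕ → R) := by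
  rw [rowMul_stirlingMat_single]
  funext n
  cases n <;> simp [stirlingMat, stirling2_eq_stirlingSecond, Nat.stirlingSecond_one_right]

theorem rowMul_stirlingMat_binomConvPow (a : ℕ → R) (m : ℕ) :
    rowMul stirlingMat (binomConvPow a m) = binomConvPow (rowMul stirlingMat a) m := by
  induction m with
  | zero => exact rowMul_stirlingMat_single_zero
  | succ m ih => rw [binomConvPow_succ, rowMul_stirlingMat_binomConv, ih, binomConvPow_succ]

theorem rowMul_stirlingMat_binomExp [Algebra ℚ R] {a : ℕ → R} (ha : a 0 = 0) :
    rowMul stirlingMat (binomExp a) = binomExp (rowMul stirlingMat a) := by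
  funext n
  calc rowMul stirlingMat (binomExp a) n
      = ∑ k ∈ range (n + 1), ∑ m ∈ range (n + 1),
          (m.factorial : ℚ)⁻¹ • (binomConvPow a m k * stirlingMat k n) := by
        rw [rowMul_apply]
        refine sum_congr rfl fun k hk => ?_
        rw [binomExp_eq_sum_range ha (by simpa [Nat.lt_succ_iff] using hk), sum_mul]
        simp only [smul_mul_assoc]
    _ = binomExp (rowMul stirlingMat a) n := by
        rw [sum_comm]
        refine sum_congr rfl fun m _ => ?_
        rw [← smul_sum, ← rowMul_stirlingMat_binomConvPow]
        rfl

theorem shift_rowMul_stirlingMat (v : ℕ → R) :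
    (fun n => rowMul stirlingMat v (n + 1)) =
      binomConv (rowMul stirlingMat fun k => v (k + 1)) (fun _ => 1) := by
  funext n
  calc rowMul stirlingMat v (n + 1)
      = ∑ k ∈ range (n + 1), ∑ p ∈ antidiagonal n,
          v (k + 1) * (n.choose p.1 * stirlingMat k p.1) := by
        rw [rowMul_apply, sum_range_succ']
        simp only [stirlingMat, stirling2_eq_stirlingSecond, Nat.stirlingSecond_succ_zero,
          Nat.cast_zero, mul_zero, add_zero, Nat.stirlingSecond_succ_succ_eq_sum_choose,
          Nat.cast_sum, Nat.cast_mul, mul_sum]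
    _ = binomConv (rowMul stirlingMat fun k => v (k + 1)) (fun _ => 1) n := by
        rw [sum_comm]
        refine sum_congr rfl fun p hp => ?_
        rw [rowMul_apply_eq_sum_range (fun _ _ => stirlingMat_eq_zero_of_lt) _ (show p.1 ≤ n by
          have := HasAntidiagonal.mem_antidiagonal.mp hp; omega), mul_one, mul_sum]
        refine sum_congr rfl fun k _ => ?_
        ring

theorem rowMul_stirlingMat_pow_succ_single_one [Algebra ℚ R] (t : ℕ) :
    (rowMul stirlingMat ^ (t + 1)) (Pi.single 1 1) =
      binomExp ((rowMul stirlingMat ^ t) (Pi.single 1 1)) - (Pi.single 0 1 : ℕ → R) := by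
  induction t with
  | zero => simp [rowMul_stirlingMat_single_one, binomExp_single_one]
  | succ t ih =>
    conv_lhs => rw [pow_succ', Module.End.mul_apply, ih, map_sub, rowMul_stirlingMat_single_zero,
      rowMul_stirlingMat_binomExp (by simp [rowMul_pow_apply_zero])]
    rw [← Module.End.mul_apply, ← pow_succ']

theorem rowMul_stirlingMat_shift_of_julia [Algebra ℚ R] {v : ℕ → R}
    (hv : rowMul stirlingMat v = binomConv (fun _ => 1) v) :
    rowMul stirlingMat (fun n => v (n + 1)) = v + fun n => v (n + 1) := by
  have h := congrArg (fun w => egf fun n => w (n + 1)) hv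
  simp only [shift_rowMul_stirlingMat, egf_binomConv, egf_one, egf_shift,
    Derivation.leibniz, PowerSeries.derivative_exp, smul_eq_mul] at h
  apply egf_injective
  rw [← (PowerSeries.isUnit_exp R).mul_left_inj, h, map_add, egf_shift]
  ring

end StirlingAction

section Interpolation

open Polynomial

noncomputable def binomPoly (k : ℕ) : ℚ[X] := (k.factorial : ℚ)⁻¹ • descPochhammer ℚ k

noncomputable def derivAtZero : ℚ[X] →ₗ[ℚ] ℚ := (leval 0).comp derivative

theorem derivAtZero_apply (p : ℚ[X]) : derivAtZero p = (derivative p).eval 0 := rfl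

theorem eval_binomPoly (t k : ℕ) : (binomPoly k).eval (t : ℚ) = t.choose k := by
  rw [binomPoly, eval_smul, descPochhammer_eval_eq_descFactorial,
    Nat.descFactorial_eq_factorial_mul_choose, smul_eq_mul, Nat.cast_mul]
  field_simp

theorem derivative_descPochhammer_succ_eval_zero (R : Type*) [CommRing R] (k : ℕ) :
    (derivative (descPochhammer R (k + 1))).eval 0 = (-1) ^ k * k.factorial := by
  induction k with
  | zero => simp
  | succ k ih =>
    rw [descPochhammer_succ_right, derivative_mul, eval_add, eval_mul, eval_mul, ih,
      descPochhammer_eval_zero, if_neg k.succ_ne_zero, Nat.factorial_succ]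
    simp only [Nat.cast_add, Nat.cast_one, eval_sub, eval_X, eval_add, eval_natCast, eval_one,
      zero_sub, neg_add_rev, derivative_sub, derivative_X, derivative_add, derivative_natCast,
      derivative_one, add_zero, sub_zero, mul_one, Nat.cast_mul]
    ring

-- At `k = 0` both sides vanish, the right one because `x / 0 = 0` in `ℚ`.
theorem derivAtZero_binomPoly (k : ℕ) : derivAtZero (binomPoly k) = (-1) ^ (k + 1) / k := by
  rcases k with _ | k
  · simp [derivAtZero_apply, binomPoly]
  · rw [derivAtZero_apply, binomPoly, derivative_smul, eval_smul,
      derivative_descPochhammer_succ_eval_zero, Nat.factorial_succ, smul_eq_mul]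
    push_cast
    field_simp
    ring

theorem derivAtZero_binomConv (a b : ℕ → ℚ[X]) :
    derivAtZero ∘ binomConv a b =
      binomConv (derivAtZero ∘ a) (eval 0 ∘ b) + binomConv (eval 0 ∘ a) (derivAtZero ∘ b) := by
  funext n
  simp only [Function.comp_apply, Pi.add_apply, binomConv, map_sum, ← sum_add_distrib,
    derivAtZero_apply, derivative_mul, derivative_natCast, zero_mul, zero_add, eval_add, eval_mul,
    eval_natCast]

theorem eval_comp_binomConvPow (x : ℚ) (a : ℕ → ℚ[X]) (m : ℕ) :
    eval x ∘ binomConvPow a m = binomConvPow (eval x ∘ a) m :=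
  funext fun n => map_binomConvPow (evalRingHom x) a m n

theorem derivAtZero_binomConvPow (a : ℕ → ℚ[X]) (m : ℕ) :
    derivAtZero ∘ binomConvPow a (m + 1) =
      ((m + 1 : ℕ) : ℚ) • binomConv (binomConvPow (eval 0 ∘ a) m) (derivAtZero ∘ a) := by
  induction m with
  | zero =>
    have h0 : derivAtZero ∘ binomConvPow a 0 = 0 := by
      funext n
      by_cases hn : n = 0 <;> simp [binomConvPow, hn, derivAtZero_apply]
    rw [binomConvPow_succ, derivAtZero_binomConv, h0, eval_comp_binomConvPow, Nat.cast_one,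
      one_smul, add_eq_right]
    funext n
    simp [binomConv]
  | succ m ih =>
    rw [binomConvPow_succ, derivAtZero_binomConv, ih, eval_comp_binomConvPow, binomConv_smul_left,
      binomConv_assoc, binomConv_comm (derivAtZero ∘ a), ← binomConv_assoc, ← binomConvPow_succ]
    push_cast
    module

theorem derivAtZero_binomExp {a : ℕ → ℚ[X]} (ha : a 0 = 0) (n : ℕ) :
    derivAtZero (binomExp a n) = binomConv (binomExp (eval 0 ∘ a)) (derivAtZero ∘ a) n := by
  have ha0 : (eval 0 ∘ a) 0 = 0 := by simp [ha]
  have hterm (m : ℕ) : ((m + 1).factorial : ℚ)⁻¹ • derivAtZero (binomConvPow a (m + 1) n) =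
      (m.factorial : ℚ)⁻¹ * binomConv (binomConvPow (eval 0 ∘ a) m) (derivAtZero ∘ a) n := by
    rw [← Function.comp_apply (f := derivAtZero), derivAtZero_binomConvPow, Pi.smul_apply,
      smul_eq_mul, smul_eq_mul, Nat.factorial_succ]
    push_cast
    field_simp
  have h0 : derivAtZero (binomConvPow a 0 n) = 0 := by
    by_cases hn : n = 0 <;> simp [binomConvPow, hn, derivAtZero_apply]
  calc derivAtZero (binomExp a n)
      = ∑ m ∈ range (n + 1 + 1), (m.factorial : ℚ)⁻¹ • derivAtZero (binomConvPow a m n) := by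
        rw [binomExp_eq_sum_range ha (Nat.le_succ n), map_sum]
        simp only [map_rat_smul]
    _ = ∑ m ∈ range (n + 1), (m.factorial : ℚ)⁻¹ *
          ∑ p ∈ antidiagonal n,
            n.choose p.1 * binomConvPow (eval 0 ∘ a) m p.1 * derivAtZero (a p.2) := by
        rw [sum_range_succ', h0, smul_zero, add_zero]
        exact sum_congr rfl fun m _ => hterm m
    _ = binomConv (binomExp (eval 0 ∘ a)) (derivAtZero ∘ a) n := by
        simp only [binomConv, mul_sum]
        rw [sum_comm]
        refine sum_congr rfl fun p hp => ?_
        rw [binomExp_eq_sum_range ha0 (show p.1 ≤ n by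
          have := HasAntidiagonal.mem_antidiagonal.mp hp; omega), mul_sum, sum_mul]
        refine sum_congr rfl fun m _ => ?_
        simp only [smul_eq_mul, Function.comp_apply]
        ring

noncomputable def rowPowPoly (M : ℕ → ℕ → ℚ) (v : ℕ → ℚ) (n : ℕ) : ℚ[X] :=
  ∑ k ∈ range (n + 1), binomPoly k * C ((rowMul M ^ k) v n)

theorem eval_rowPowPoly {M : ℕ → ℕ → ℚ} (hM : StrictTri M) (v : ℕ → ℚ) (n t : ℕ) :
    (rowPowPoly M v n).eval (t : ℚ) = ((rowMul M + 1) ^ t) v n := by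
  simp [rowPowPoly, eval_finsetSum, eval_binomPoly, rowMul_add_one_pow_apply hM, rowMulSeries]

theorem derivAtZero_rowPowPoly (M : ℕ → ℕ → ℚ) (v : ℕ → ℚ) (n : ℕ) :
    derivAtZero (rowPowPoly M v n) = rowMulSeries M (fun k => (-1) ^ (k + 1) / k) v n := by
  simp only [rowPowPoly, rowMulSeries, map_sum, ← derivAtZero_binomPoly]
  refine sum_congr rfl fun k _ => ?_
  simp [derivAtZero_apply]

theorem derivAtZero_rowMul_stirlingMat (a : ℕ → ℚ[X]) (n : ℕ) :
    derivAtZero (rowMul stirlingMat a n) = rowMul stirlingMat (derivAtZero ∘ a) n := by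
  simp [rowMul_apply, derivAtZero_apply, stirlingMat]

end Interpolation

theorem trLam_eq_rowMulSeries {M : ℕ → ℕ → ℚ} (hM : StrictTri fun a b => M a b - trOne a b)
    (i : ℕ) : trLam M i = rowMulSeries (fun a b => M a b - trOne a b)
      (fun p => (-1) ^ p / (p + 1)) (Pi.single i 1) := by
  funext j
  have hv : ∀ k < i, (Pi.single i 1 : ℕ → ℚ) k = 0 := fun k hk => by simp [hk.ne]
  simp only [trLam, trPow_eq_rowMul_pow, smul_eq_mul]
  refine sum_subset (range_subset_range.mpr (by omega)) fun p _ hp => ?_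
  rw [rowMul_pow_apply_eq_zero hM hv p (by rw [mem_range] at hp; omega), mul_zero]

theorem trLog_eq_rowMulSeries {M : ℕ → ℕ → ℚ} (hM : StrictTri fun a b => M a b - trOne a b)
    (i : ℕ) : trLog M i = rowMulSeries (fun a b => M a b - trOne a b)
      (fun p => (-1) ^ (p + 1) / p) (Pi.single i 1) := by
  funext j
  have hv : ∀ k < i, (Pi.single i 1 : ℕ → ℚ) k = 0 := fun k hk => by simp [hk.ne]
  simp only [trLog, trPow_eq_rowMul_pow, smul_eq_mul]
  refine sum_subset (fun p hp => by rw [mem_Icc] at hp; rw [mem_range]; omega) fun p _ hp => ?_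
  rcases Nat.eq_zero_or_pos p with rfl | hp0
  · simp
  · rw [rowMul_pow_apply_eq_zero hM hv p (by rw [mem_Icc] at hp; omega), mul_zero]

section StirlingLogarithm

open Polynomial

noncomputable def SmatSubOne : ℕ → ℕ → ℚ := fun a b => Smat a b - trOne a b

theorem strictTri_SmatSubOne : StrictTri SmatSubOne := by
  intro i j hji
  rcases hji.lt_or_eq with h | rfl
  · simp [SmatSubOne, Smat, trOne, h.ne', stirling2_eq_stirlingSecond,
      Nat.stirlingSecond_eq_zero_of_lt h]
  · simp [SmatSubOne, Smat, trOne, stirling2_eq_stirlingSecond, Nat.stirlingSecond_self]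

theorem SmatSubOne_self_succ_ne_zero {k : ℕ} (hk : k ≠ 0) : SmatSubOne k (k + 1) ≠ 0 := by
  show (stirling2 (k + 1) k : ℚ) - trOne k (k + 1) ≠ 0
  rw [trOne, if_neg (by omega), sub_zero, stirling2_eq_stirlingSecond,
    Nat.stirlingSecond_succ_self_left, Nat.cast_ne_zero]
  exact (Nat.choose_pos (by omega)).ne'

theorem rowMul_Smat : rowMul Smat = rowMul SmatSubOne + 1 := by
  rw [show SmatSubOne = fun a b => Smat a b - trOne a b from rfl, rowMul_sub_trOne, sub_add_cancel]

-- `rowMul_stirlingMat_pow_succ_single_one` holds at every `t ∈ ℕ`, hence as polynomials in `t`.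
theorem rowMul_stirlingMat_rowPowPoly :
    rowMul stirlingMat (rowPowPoly SmatSubOne (Pi.single 1 1)) =
      binomExp (rowPowPoly SmatSubOne (Pi.single 1 1)) - Pi.single 0 1 := by
  funext n
  refine eq_of_infinite_eval_eq _ _ <|
    Set.infinite_of_injective_forall_mem Nat.cast_injective fun t => ?_
  have hG : eval (t : ℚ) ∘ rowPowPoly SmatSubOne (Pi.single 1 1) =
      (rowMul stirlingMat ^ t) (Pi.single 1 1) := by
    funext k
    rw [Function.comp_apply, eval_rowPowPoly strictTri_SmatSubOne, ← rowMul_Smat]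
    rfl
  have hS : (fun k n => eval (t : ℚ) (stirlingMat k n)) = stirlingMat := by
    funext k n
    simp [stirlingMat]
  have he : eval (t : ℚ) ((Pi.single 0 1 : ℕ → ℚ[X]) n) = (Pi.single 0 1 : ℕ → ℚ) n := by
    by_cases hn : n = 0 <;> simp [hn]
  simp only [Set.mem_ofPred_eq, Pi.sub_apply, eval_sub, ← coe_evalRingHom, map_rowMul,
    map_binomExp]
  rw [coe_evalRingHom, hS, hG, he, ← Pi.sub_apply, ← rowMul_stirlingMat_pow_succ_single_one,
    pow_succ', Module.End.mul_apply]

-- Julia's equation `V ∘ φ = eˣ V`: the derivative at `t = 0` of the previous identity.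
theorem rowMul_Smat_trLog :
    rowMul Smat (trLog Smat 1) = binomConv (fun _ => 1) (trLog Smat 1) := by
  set g := rowPowPoly SmatSubOne (Pi.single 1 1)
  have hL : derivAtZero ∘ g = trLog Smat 1 := by
    funext n
    rw [trLog_eq_rowMulSeries strictTri_SmatSubOne, Function.comp_apply, derivAtZero_rowPowPoly]
    rfl
  have hg0 : g 0 = 0 := by
    simp [g, rowPowPoly, rowMul_pow_apply_zero]
  have he : eval 0 ∘ g = Pi.single 1 1 := by
    funext n
    simpa using eval_rowPowPoly strictTri_SmatSubOne (Pi.single 1 1) n 0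
  funext n
  have h := congrArg derivAtZero (congrFun rowMul_stirlingMat_rowPowPoly n)
  have h0 : derivAtZero ((Pi.single 0 1 : ℕ → ℚ[X]) n) = 0 := by
    by_cases hn : n = 0 <;> simp [hn, derivAtZero_apply]
  rwa [Pi.sub_apply, map_sub, derivAtZero_binomExp hg0, he, binomExp_single_one, hL, h0, sub_zero,
    derivAtZero_rowMul_stirlingMat, hL] at h

end StirlingLogarithm

theorem trLam_row_eq_shifted_log_row_general (j : ℕ) :
    trLam Smat 1 j = trLog Smat 1 (j + 1) := by
  have hlam : rowMul SmatSubOne (trLam Smat 1) = trLog Smat 1 := by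
    rw [trLam_eq_rowMulSeries strictTri_SmatSubOne, trLog_eq_rowMulSeries strictTri_SmatSubOne]
    refine rowMul_rowMulSeries strictTri_SmatSubOne (fun p => ?_) (by simp) _
    push_cast
    ring
  have hshift : rowMul SmatSubOne (fun n => trLog Smat 1 (n + 1)) = trLog Smat 1 := by
    have h := rowMul_stirlingMat_shift_of_julia rowMul_Smat_trLog
    rwa [show (stirlingMat : ℕ → ℕ → ℚ) = Smat from rfl, rowMul_Smat, LinearMap.add_apply,
      Module.End.one_apply, add_left_inj] at h
  have hdiff := eq_zero_of_rowMul_eq_zero strictTri_SmatSubOne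
    (fun _ => SmatSubOne_self_succ_ne_zero) (d := trLam Smat 1 - fun n => trLog Smat 1 (n + 1))
    (by rw [map_sub, hlam, hshift, sub_self]) (by simp [trLam, trLog, trPow, trOne])
  exact sub_eq_zero.mp (congrFun hdiff j)

theorem trLam_row_eq_shifted_log_row (j : ℕ) (hj : 1 ≤ j) :
    trLam Smat 1 j = trLog Smat 1 (j + 1) :=
  trLam_row_eq_shifted_log_row_general j
end
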